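/- Let K_1, K_2 be convex bodies in ℝ^n, each admitting at least one periodic billiard trajectory. Then every periodic billiard trajectory on the Minkowski sum K_1 + K_2 has length ≥ μ_P(K_1) + μ_P(K_2). -/

import Mathlib

open scoped RealInnerProductSpace Pointwise
open Metric

noncomputable section

/-- Euclidean space ℝ^n. -/
abbrev Euc (n : ℕ) := EuclideanSpace ℝ (Fin n)

/-- The image of a closed polygon with vertices `q 0, …, q (m-1)` (indices mod `m`):
the union of the segments `[q i, q (i+1)]`. -/
def polyImage {n m : ℕ} [NeZero m] (q : Fin m → Euc n) : Set (Euc n) :=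
  ⋃ i : Fin m, segment ℝ (q i) (q (i + 1))

/-- The length of a closed polygon: `∑ i, ‖q (i+1) - q i‖`. -/
noncomputable def polyLength {n m : ℕ} [NeZero m] (q : Fin m → Euc n) : ℝ :=
  ∑ i : Fin m, ‖q (i + 1) - q i‖

/-- A convex body: a compact convex set with nonempty interior. -/
def IsConvexBody {n : ℕ} (K : Set (Euc n)) : Prop :=
  IsCompact K ∧ Convex ℝ K ∧ (interior K).Nonempty

/-- A closed polygon belongs to `𝒫⁺(K)` if no translate of its image is contained
in the interior of `K`. -/
def InPPlus {n m : ℕ} [NeZero m] (K : Set (Euc n)) (q : Fin m → Euc n) : Prop :=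
  ∀ x : Euc n, ¬ ((fun p => p + x) '' polyImage q ⊆ interior K)

/-- Unit direction of the `i`-th edge of a closed polygon. -/
noncomputable def dir {n m : ℕ} [NeZero m] (q : Fin m → Euc n) (i : Fin m) : Euc n :=
  ‖q (i + 1) - q i‖⁻¹ • (q (i + 1) - q i)

/-- Outer normal `ν i = u (i-1) - u i` at the `i`-th vertex. -/
noncomputable def normalVec {n m : ℕ} [NeZero m] (q : Fin m → Euc n) (i : Fin m) : Euc n :=
  dir q (i - 1) - dir q i

/-- A periodic billiard trajectory on a convex body `K`. -/
def IsBilliard {n m : ℕ} [NeZero m] (K : Set (Euc n)) (q : Fin m → Euc n) : Prop :=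
  2 ≤ m ∧ (∀ i, q (i + 1) ≠ q i) ∧ (∀ i, q i ∈ K) ∧
    ∀ i, normalVec q i ≠ 0 ∧ ∀ x ∈ K, ⟪x - q i, normalVec q i⟫ ≤ 0

/-- The infimum of lengths of periodic billiard trajectories on `K`. -/
noncomputable def muP {n : ℕ} (K : Set (Euc n)) : ℝ :=
  sInf {L : ℝ | ∃ (m : ℕ) (hm : NeZero m) (q : Fin m → Euc n),
    @IsBilliard n m hm K q ∧ @polyLength n m hm q = L}

/-!
Let `q` be a billiard trajectory on `K₁ + K₂` with outer normals `νᵢ`, and pick `aᵢ ∈ K₁`,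
`bᵢ ∈ K₂` maximizing `⟪νᵢ, ·⟫`. The reflection law gives
`∑ ⟪νᵢ, aᵢ⟫ + ∑ ⟪νᵢ, bᵢ⟫ ≤ ∑ ⟪νᵢ, qᵢ⟫ = length q`. Since `∑ νᵢ = 0`, the normals of `q` show that
the copy of `q` scaled to length `∑ ⟪νᵢ, aᵢ⟫` has no translate inside the interior of `K₁`, so it
suffices that `μ_P(K)` is at most the length of every closed polygon with no translate inside
`int K`. To see this, minimize the length over such `m`-gons. A minimizer has a separating
functional (Hahn–Banach), which first-order optimality makes proportional to the pairing with its
normals; shrunken copies of it fit, so in the limit a translate lies in `K`, and there it satisfies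
the reflection law. Degenerate vertices lie on the segment joining their neighbours and are removed
by induction on `m`.
-/

open Finset

theorem HasDerivAt.norm {F : Type*} [NormedAddCommGroup F] [InnerProductSpace ℝ F]
    {f : ℝ → F} {f' : F} {x : ℝ} (hf : HasDerivAt f f' x) (h0 : f x ≠ 0) :
    HasDerivAt (fun t => ‖f t‖) (⟪f x, f'⟫ / ‖f x‖) x := by
  have h := hf.norm_sq.sqrt (by positivity)
  simp only [Real.sqrt_sq (norm_nonneg _)] at h
  convert h using 1
  rw [mul_div_mul_left _ _ two_ne_zero]

theorem LinearMap.exists_nonneg_smul_eq_of_forall_nonneg {V : Type*} [AddCommGroup V]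
    [Module ℝ V] (f g : V →ₗ[ℝ] ℝ) (h : ∀ v, 0 ≤ g v → 0 ≤ f v) :
    ∃ c : ℝ, 0 ≤ c ∧ f = c • g := by
  have hker : ∀ v, g v = 0 → f v = 0 := fun v hv =>
    le_antisymm (by simpa using h (-v) (by simp [hv])) (h v hv.ge)
  by_cases hg : g = 0
  · exact ⟨0, le_rfl, LinearMap.ext fun v => by simp [hker v (by simp [hg])]⟩
  obtain ⟨v, hv⟩ : ∃ v, g v ≠ 0 := by
    by_contra! h'
    exact hg (LinearMap.ext h')
  set u := (g v)⁻¹ • v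
  have hu : g u = 1 := by simp [u, hv]
  refine ⟨f u, h u (by rw [hu]; exact zero_le_one), LinearMap.ext fun w => ?_⟩
  have := hker (w - g w • u) (by simp [hu])
  simp only [map_sub, map_smul, smul_eq_mul, sub_eq_zero] at this
  simp [this, mul_comm]

section Fits

variable {E : Type*} [NormedAddCommGroup E] {ι : Type*}

def Fits (U : Set E) (p : ι → E) : Prop :=
  ∃ x, ∀ i, p i + x ∈ U

theorem fits_add_const_iff {U : Set E} {p : ι → E} (c : E) :
    Fits U (fun i => p i + c) ↔ Fits U p :=
  ⟨fun ⟨x, hx⟩ => ⟨c + x, fun i => by simpa [add_assoc] using hx i⟩,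
    fun ⟨x, hx⟩ => ⟨x - c, fun i => by simpa using hx i⟩⟩

theorem Fits.mono {U V : Set E} {p : ι → E} (h : Fits U p) (hUV : U ⊆ V) : Fits V p :=
  let ⟨x, hx⟩ := h
  ⟨x, fun i => hUV (hx i)⟩

theorem fits_of_unique [Unique ι] {U : Set E} (hU : U.Nonempty) (p : ι → E) : Fits U p := by
  obtain ⟨z, hz⟩ := hU
  exact ⟨z - p default, fun i => by simpa [Unique.eq_default i] using hz⟩

theorem isOpen_setOf_fits [Finite ι] {U : Set E} (hU : IsOpen U) :
    IsOpen {p : ι → E | Fits U p} := by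
  have : {p : ι → E | Fits U p} =
      ⋃ x, (fun p : ι → E => fun i => p i + x) ⁻¹' Set.univ.pi fun _ => U := by
    ext; simp [Fits]
  rw [this]
  exact isOpen_iUnion fun x => (isOpen_set_pi Set.finite_univ fun _ _ => hU).preimage
    (by fun_prop)

theorem isClosed_setOf_fits [Finite ι] {K : Set E} (hK : IsCompact K) :
    IsClosed {p : ι → E | Fits K p} := by
  rcases isEmpty_or_nonempty ι with hι | ⟨⟨i₀⟩⟩
  · convert isClosed_univ
    simp [Fits]
  have : CompactSpace K := isCompact_iff_compactSpace.1 hK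
  -- a translation `x` is encoded by the point `p i₀ + x ∈ K`, which ranges over a compact set
  have : {p : ι → E | Fits K p} =
      Prod.fst '' {pk : (ι → E) × K | ∀ i, pk.1 i - pk.1 i₀ + pk.2 ∈ K} := by
    ext p
    constructor
    · rintro ⟨x, hx⟩
      exact ⟨(p, ⟨p i₀ + x, hx i₀⟩), fun i => by simpa [add_comm] using hx i, rfl⟩
    · rintro ⟨⟨p, k⟩, hk, rfl⟩
      exact ⟨k - p i₀, fun i => by simpa [sub_add_eq_add_sub, add_sub_assoc] using hk i⟩
  rw [this]
  refine isClosedMap_fst_of_compactSpace _ ?_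
  simp only [Set.ofPred_forall]
  exact isClosed_iInter fun i => hK.isClosed.preimage (by fun_prop)

variable [NormedSpace ℝ E]

theorem Fits.of_forall_mem_segment {κ : Type*} {U : Set E} (hU : Convex ℝ U) {p : ι → E}
    {p' : κ → E} (h : Fits U p') (hseg : ∀ i, ∃ a b, p i ∈ segment ℝ (p' a) (p' b)) :
    Fits U p := by
  obtain ⟨x, hx⟩ := h
  refine ⟨x, fun i => ?_⟩
  obtain ⟨a, b, hab⟩ := hseg i
  apply hU.segment_subset (hx a) (hx b)
  simpa [add_comm _ x] using (mem_segment_translate ℝ x).2 hab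

end Fits

section Obstruction

variable {E : Type*} [NormedAddCommGroup E] [NormedSpace ℝ E] {ι : Type*}

def IsObstruction (K : Set E) (f : (ι → E) →ₗ[ℝ] ℝ) (p : ι → E) : Prop :=
  f ≠ 0 ∧ (∀ x : E, f (fun _ => x) = 0) ∧ ∀ y : ι → E, (∀ i, y i ∈ K) → f y ≤ f p

theorem IsObstruction.not_fits_interior [Finite ι] {K : Set E} {f : (ι → E) →ₗ[ℝ] ℝ}
    {p : ι → E} (h : IsObstruction K f p) : ¬ Fits (interior K) p := by
  obtain ⟨hf0, hconst, hle⟩ := h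
  rintro ⟨x, hx⟩
  obtain ⟨v, hv⟩ : ∃ v, 0 < f v := by
    obtain ⟨v, hv⟩ : ∃ v, f v ≠ 0 := by
      by_contra! h
      exact hf0 (LinearMap.ext h)
    rcases hv.lt_or_gt with h | h
    exacts [⟨-v, by simpa using h⟩, ⟨v, h⟩]
  have hopen : IsOpen (Set.univ.pi fun _ : ι => interior K) :=
    isOpen_set_pi Set.finite_univ fun _ _ => isOpen_interior
  have hev : ∀ᶠ t in nhdsWithin (0 : ℝ) (Set.Ioi 0),
      (p + fun _ => x) + t • v ∈ Set.univ.pi fun _ => interior K := by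
    refine (Continuous.tendsto' (by fun_prop) 0 _ ?_ |>.eventually
      (hopen.mem_nhds fun i _ => hx i)).filter_mono nhdsWithin_le_nhds
    simp only [zero_smul, add_zero]
    rfl
  obtain ⟨t, ht, ht0⟩ := (hev.and self_mem_nhdsWithin).exists
  have := hle _ fun i => interior_subset (ht i (Set.mem_univ i))
  rw [map_add, map_add, hconst, map_smul, smul_eq_mul] at this
  nlinarith [show (0 : ℝ) < t from ht0]

theorem exists_isObstruction [Finite ι] {K : Set E} (hKc : IsClosed K) (hKconv : Convex ℝ K)
    (hKint : (interior K).Nonempty) {p : ι → E} (hp : ¬ Fits (interior K) p) :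
    ∃ f, IsObstruction K f p := by
  set S := Set.univ.pi fun _ : ι => interior K
  set T := Set.range fun x : E => p + fun _ => x
  have hTconv : Convex ℝ T := by
    rintro _ ⟨x₁, rfl⟩ _ ⟨x₂, rfl⟩ a b - - hab
    refine ⟨a • x₁ + b • x₂, funext fun i => ?_⟩
    simp only [Pi.add_apply, Pi.smul_apply]
    linear_combination (norm := module) -(hab • p i)
  have hdisj : Disjoint S T := by
    rw [Set.disjoint_left]
    rintro _ hS ⟨x, rfl⟩
    exact hp ⟨x, fun i => hS i (Set.mem_univ i)⟩
  obtain ⟨f, u, hfS, hfT⟩ := geometric_hahn_banach_open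
    (convex_pi fun _ _ => hKconv.interior)
    (isOpen_set_pi Set.finite_univ fun _ _ => isOpen_interior) hTconv hdisj
  -- `f` is bounded below on the line `t ↦ p + t x`, hence vanishes on constants
  have hconst : ∀ x : E, f (fun _ => x) = 0 := by
    intro x
    by_contra hx
    have := hfT (p + ((u - f p - 1) / f fun _ => x) • fun _ => x) ⟨_, rfl⟩
    rw [map_add, map_smul, smul_eq_mul, div_mul_cancel₀ _ hx] at this
    linarith
  have hup : u ≤ f p := by simpa [hconst] using hfT _ ⟨0, rfl⟩
  -- `K^ι` is the closure of `S` since `K` is a convex body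
  have hKS : ∀ y : ι → E, (∀ i, y i ∈ K) → f y ≤ u := by
    intro y hy
    have hcl : closure S = Set.univ.pi fun _ => K := by
      rw [closure_pi_set, hKconv.closure_interior_eq_closure_of_nonempty_interior hKint,
        hKc.closure_eq]
    have hyS : y ∈ closure S := hcl ▸ fun i _ => hy i
    exact closure_lt_subset_le f.continuous continuous_const
      (closure_mono (fun s hs => hfS s hs) hyS)
  refine ⟨f, fun h0 => ?_, hconst, fun y hy => (hKS y hy).trans hup⟩
  obtain ⟨z, hz⟩ := hKint
  have h₁ := hfS _ fun _ _ => hz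
  have h₂ := hup
  simp only [← ContinuousLinearMap.coe_coe, h0, LinearMap.zero_apply] at h₁ h₂
  linarith

end Obstruction

section Pairing

variable {ι F : Type*} [Fintype ι] [NormedAddCommGroup F] [InnerProductSpace ℝ F]

def pairing (w : ι → F) : (ι → F) →ₗ[ℝ] ℝ where
  toFun v := ∑ i, ⟪w i, v i⟫
  map_add' v v' := by simp only [Pi.add_apply, inner_add_right, sum_add_distrib]
  map_smul' c v := by
    simp only [Pi.smul_apply, real_inner_smul_right, mul_sum, RingHom.id_apply, smul_eq_mul]

theorem pairing_apply (w v : ι → F) : pairing w v = ∑ i, ⟪w i, v i⟫ := rfl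

theorem pairing_const (w : ι → F) (x : F) : pairing w (fun _ => x) = ⟪∑ i, w i, x⟫ := by
  simp [pairing_apply, sum_inner]

theorem pairing_single [DecidableEq ι] (w : ι → F) (i : ι) (x : F) :
    pairing w (Pi.single i x) = ⟪w i, x⟫ := by
  rw [pairing_apply, Fintype.sum_eq_single i fun j hj => by simp [hj]]
  simp

theorem pairing_le_pairing {w v v' : ι → F} (h : ∀ i, ⟪w i, v i⟫ ≤ ⟪w i, v' i⟫) :
    pairing w v ≤ pairing w v' :=
  sum_le_sum fun i _ => h i

end Pairing

section Polygon

variable {n m : ℕ} [NeZero m]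

theorem polyLength_nonneg (q : Fin m → Euc n) : 0 ≤ polyLength q :=
  sum_nonneg fun _ _ => norm_nonneg _

theorem polyLength_pos {q : Fin m → Euc n} {i : Fin m} (h : q (i + 1) ≠ q i) :
    0 < polyLength q :=
  sum_pos' (fun _ _ => norm_nonneg _) ⟨i, mem_univ _, norm_pos_iff.2 (sub_ne_zero.2 h)⟩

theorem polyLength_add_const (q : Fin m → Euc n) (x : Euc n) :
    polyLength (fun i => q i + x) = polyLength q := by
  simp [polyLength]

theorem polyLength_smul (q : Fin m → Euc n) {c : ℝ} (hc : 0 ≤ c) :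
    polyLength (c • q) = c * polyLength q := by
  simp [polyLength, ← smul_sub, norm_smul, abs_of_nonneg hc, mul_sum]

theorem polyLength_comp_add_right (q : Fin m → Euc n) (k : Fin m) :
    polyLength (fun i => q (i + k)) = polyLength q := by
  simp only [polyLength]
  exact Fintype.sum_equiv (Equiv.addRight k) _ _ fun _ => by simp [add_right_comm]

open Fin.NatCast in
theorem norm_sub_le_polyLength (q : Fin m → Euc n) (i : Fin m) :
    ‖q i - q 0‖ ≤ polyLength q := by
  have h := dist_le_range_sum_dist (fun k : ℕ => q (k : Fin m)) i
  simp only [Fin.cast_val_eq_self, Nat.cast_zero, Nat.cast_succ] at h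
  rw [← dist_eq_norm, dist_comm]
  calc dist (q 0) (q i) ≤ ∑ k ∈ range i, dist (q k) (q (k + 1)) := h
    _ ≤ ∑ k ∈ range m, dist (q k) (q (k + 1)) :=
        sum_le_sum_of_subset_of_nonneg (range_subset_range.2 i.isLt.le) fun _ _ _ => dist_nonneg
    _ = polyLength q := by simp [sum_range, polyLength, dist_eq_norm, norm_sub_rev]

theorem normalVec_add_const (q : Fin m → Euc n) (x : Euc n) (i : Fin m) :
    normalVec (fun j => q j + x) i = normalVec q i := by
  simp [normalVec, dir]

theorem sum_normalVec (q : Fin m → Euc n) : ∑ i, normalVec q i = 0 := by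
  simp only [normalVec, sum_sub_distrib]
  rw [Fintype.sum_equiv (Equiv.subRight 1) (fun i => dir q (i - 1)) (dir q) fun _ => rfl,
    sub_self]

theorem pairing_normalVec (q v : Fin m → Euc n) :
    pairing (normalVec q) v = ∑ i, ⟪dir q i, v (i + 1) - v i⟫ := by
  simp only [pairing_apply, normalVec, inner_sub_left, inner_sub_right, sum_sub_distrib]
  congr 1
  exact Fintype.sum_equiv (Equiv.subRight 1) _ _ fun _ => by simp

theorem pairing_normalVec_self (q : Fin m → Euc n) :
    pairing (normalVec q) q = polyLength q := by
  rw [pairing_normalVec, polyLength]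
  refine sum_congr rfl fun i _ => ?_
  rw [dir, real_inner_smul_left, real_inner_self_eq_norm_sq]
  rcases eq_or_ne ‖q (i + 1) - q i‖ 0 with h | h
  · simp [h]
  · field_simp

theorem hasDerivAt_polyLength_add_smul {q : Fin m → Euc n} (hq : ∀ i, q (i + 1) ≠ q i)
    (v : Fin m → Euc n) :
    HasDerivAt (fun t : ℝ => polyLength (q + t • v)) (pairing (normalVec q) v) 0 := by
  rw [pairing_normalVec]
  refine HasDerivAt.fun_sum fun i _ => ?_
  have hfun : (fun t : ℝ => ‖(q + t • v) (i + 1) - (q + t • v) i‖) =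
      fun t => ‖(q (i + 1) - q i) + t • (v (i + 1) - v i)‖ := by
    funext t
    simp only [Pi.add_apply, Pi.smul_apply, smul_sub]
    congr 1
    abel
  rw [hfun]
  refine (((hasDerivAt_id' (0 : ℝ)).smul_const (v (i + 1) - v i)).const_add
    (q (i + 1) - q i)).norm (by simpa using sub_ne_zero.2 (hq i)) |>.congr_deriv ?_
  simp [dir, real_inner_smul_left, div_eq_inv_mul]

theorem ne_of_forall_notMem_segment {q : Fin m → Euc n}
    (h : ∀ j, q j ∉ segment ℝ (q (j - 1)) (q (j + 1))) (i : Fin m) : q (i + 1) ≠ q i :=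
  fun he => h i (he ▸ right_mem_segment ℝ _ _)

theorem normalVec_ne_zero_of_notMem_segment {q : Fin m → Euc n} {j : Fin m}
    (h : q j ∉ segment ℝ (q (j - 1)) (q (j + 1))) : normalVec q j ≠ 0 := by
  intro h0
  refine h (mem_segment_iff_sameRay.2 (sameRay_iff_inv_norm_smul_eq.2 (Or.inr (Or.inr ?_))))
  simpa [normalVec, dir, sub_eq_zero] using h0

end Polygon

theorem polyLength_castSucc_le {n k : ℕ} (r : Fin (k + 2) → Euc n) :
    polyLength (fun i : Fin (k + 1) => r i.castSucc) ≤ polyLength r := by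
  simp only [polyLength, Fin.sum_univ_castSucc (n := k + 1), Fin.sum_univ_castSucc (n := k),
    Fin.coeSucc_eq_succ, Fin.last_add_one, Fin.succ_last, ← Fin.succ_castSucc, Fin.castSucc_zero]
  linarith [norm_sub_le_norm_sub_add_norm_sub (r 0) (r (Fin.last (k + 1)))
    (r (Fin.last k).castSucc)]

theorem exists_delete_vertex {n k : ℕ} {q : Fin (k + 2) → Euc n} {j : Fin (k + 2)}
    (hj : q j ∈ segment ℝ (q (j - 1)) (q (j + 1))) :
    ∃ q' : Fin (k + 1) → Euc n, polyLength q' ≤ polyLength q ∧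
      ∀ i, ∃ a b, q i ∈ segment ℝ (q' a) (q' b) := by
  -- rotate the polygon so that vertex `j` comes last, then drop it
  refine ⟨fun i => q (i.castSucc + (j + 1)),
    (polyLength_castSucc_le fun i => q (i + (j + 1))).trans (polyLength_comp_add_right q _).le,
    fun i => ?_⟩
  have hlast : Fin.last (k + 1) + (j + 1) = j := by
    rw [add_left_comm, Fin.last_add_one, add_zero]
  by_cases hij : i = j
  · refine ⟨Fin.last k, 0, ?_⟩
    have hprev : (Fin.last k).castSucc + (j + 1) = j - 1 := by
      rw [eq_sub_iff_add_eq, add_right_comm _ (j + 1),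
        Fin.coeSucc_eq_succ.trans (Fin.succ_last k), hlast]
    simpa [hprev, hij] using hj
  · have hc : i - (j + 1) ≠ Fin.last (k + 1) := fun hc =>
      hij (by rw [← hlast, ← hc, sub_add_cancel])
    exact ⟨(i - (j + 1)).castPred hc, (i - (j + 1)).castPred hc, by simp⟩

section Minimizer

variable {n m : ℕ} [NeZero m]

theorem exists_isMinOn_polyLength {U : Set (Euc n)} (hU : IsOpen U) {p : Fin m → Euc n}
    (hp : ¬ Fits U p) :
    ∃ q : Fin m → Euc n, ¬ Fits U q ∧ polyLength q ≤ polyLength p ∧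
      IsMinOn polyLength {r | ¬ Fits U r} q := by
  have hcont : Continuous fun r : Fin m → Euc n => polyLength r := by
    unfold polyLength
    fun_prop
  -- by translation invariance it suffices to minimize over the compact set of those with `r 0 = 0`
  set T := {r : Fin m → Euc n | ¬ Fits U r ∧ r 0 = 0 ∧ polyLength r ≤ polyLength p}
  have hT : ∀ r, ¬ Fits U r → polyLength r ≤ polyLength p → (fun i => r i + -r 0) ∈ T :=
    fun r hr hrp => ⟨(fits_add_const_iff _).not.2 hr, by simp, by rwa [polyLength_add_const]⟩
  have hTc : IsCompact T := by
    refine Metric.isCompact_of_isClosed_isBounded ?_ ?_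
    · exact (isOpen_setOf_fits hU).isClosed_compl.inter
        ((isClosed_eq (continuous_apply 0) continuous_const).inter
          (isClosed_le hcont continuous_const))
    · refine (Metric.isBounded_closedBall (x := 0) (r := polyLength p)).subset fun r hr => ?_
      rw [mem_closedBall, dist_zero_right, pi_norm_le_iff_of_nonneg (polyLength_nonneg p)]
      exact fun i => by simpa [hr.2.1] using (norm_sub_le_polyLength r i).trans hr.2.2
  obtain ⟨q, hqT, hqmin⟩ := hTc.exists_isMinOn ⟨_, hT p hp le_rfl⟩ hcont.continuousOn
  refine ⟨q, hqT.1, hqT.2.2, isMinOn_iff.2 fun r hr => ?_⟩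
  rcases le_or_gt (polyLength r) (polyLength p) with hrp | hrp
  · simpa [polyLength_add_const] using isMinOn_iff.1 hqmin _ (hT r hr hrp)
  · exact hqT.2.2.trans hrp.le

variable {K : Set (Euc n)} {q : Fin m → Euc n}

theorem fits_of_isMinOn (hK : IsCompact K) (hq : 0 < polyLength q)
    (hmin : IsMinOn polyLength {r | ¬ Fits (interior K) r} q) : Fits K q := by
  -- every scaled copy `c • q` with `c < 1` is shorter than `q`, hence fits into `K`
  have hev : ∀ᶠ c in nhdsWithin (1 : ℝ) (Set.Iio 1), c • q ∈ {r | Fits K r} := by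
    filter_upwards [Ioo_mem_nhdsLT zero_lt_one] with c hc
    by_contra h
    have := isMinOn_iff.1 hmin (c • q) fun hf => h (hf.mono interior_subset)
    rw [polyLength_smul _ hc.1.le] at this
    nlinarith [hc.2]
  exact (isClosed_setOf_fits hK).mem_of_tendsto
    (((by fun_prop : Continuous fun c : ℝ => c • q).tendsto' 1 q (one_smul ℝ q)).mono_left
      nhdsWithin_le_nhds) hev

theorem pairing_normalVec_le_of_isMinOn (hK : IsConvexBody K) (hedge : ∀ i, q (i + 1) ≠ q i)
    (hq : ¬ Fits (interior K) q) (hmin : IsMinOn polyLength {r | ¬ Fits (interior K) r} q)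
    {y : Fin m → Euc n} (hy : ∀ i, y i ∈ K) :
    pairing (normalVec q) y ≤ pairing (normalVec q) q := by
  obtain ⟨g, hg0, hgconst, hgle⟩ := exists_isObstruction hK.1.isClosed hK.2.1 hK.2.2 hq
  -- moving `q` in a direction `v` with `g v ≥ 0` keeps `g` an obstruction, so cannot shorten `q`
  have hdir : ∀ v, 0 ≤ g v → 0 ≤ pairing (normalVec q) v := by
    intro v hv
    have hloc : IsLocalMinOn (fun t : ℝ => polyLength (q + t • v)) (Set.Ici 0) 0 := by
      refine IsMinOn.localize (isMinOn_iff.2 fun t ht => ?_)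
      have hobs : IsObstruction K g (q + t • v) := by
        refine ⟨hg0, hgconst, fun y hy => (hgle y hy).trans ?_⟩
        rw [map_add, map_smul, smul_eq_mul]
        nlinarith [Set.mem_Ici.1 ht]
      simpa using isMinOn_iff.1 hmin _ hobs.not_fits_interior
    have hone : (1 : ℝ) ∈ posTangentConeAt (Set.Ici 0) 0 :=
      mem_posTangentConeAt_of_segment_subset (by
        rw [zero_add, segment_eq_Icc zero_le_one]
        exact Set.Icc_subset_Ici_self)
    simpa using hloc.hasFDerivWithinAt_nonneg
      (hasDerivAt_polyLength_add_smul hedge v).hasFDerivAt.hasFDerivWithinAt hone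
  obtain ⟨c, hc, hfc⟩ := (pairing (normalVec q)).exists_nonneg_smul_eq_of_forall_nonneg g hdir
  rw [hfc]
  simpa using mul_le_mul_of_nonneg_left (hgle y hy) hc

theorem exists_isBilliard_add_const_of_isMinOn (hK : IsConvexBody K) (hm : 2 ≤ m)
    (hq : ¬ Fits (interior K) q) (hmin : IsMinOn polyLength {r | ¬ Fits (interior K) r} q)
    (hnd : ∀ j, q j ∉ segment ℝ (q (j - 1)) (q (j + 1))) :
    ∃ x, IsBilliard K fun i => q i + x := by
  classical
  have hedge := ne_of_forall_notMem_segment hnd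
  obtain ⟨x, hx⟩ := fits_of_isMinOn hK.1 (polyLength_pos (hedge 0)) hmin
  refine ⟨x, hm, fun i h => hedge i (add_right_cancel h), hx, fun i => ?_⟩
  rw [normalVec_add_const]
  refine ⟨normalVec_ne_zero_of_notMem_segment (hnd i), fun y hy => ?_⟩
  set Q : Fin m → Euc n := fun j => q j + x
  have hQ : pairing (normalVec q) Q = pairing (normalVec q) q := by
    rw [show Q = q + fun _ => x from rfl, map_add, pairing_const, sum_normalVec,
      inner_zero_left, add_zero]
  -- compare with the polygon in which only vertex `i` is moved, to `y`
  have hyQ : ∀ j, (Q + Pi.single i (y - Q i) : Fin m → Euc n) j ∈ K := by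
    intro j
    rcases eq_or_ne j i with rfl | hj
    · simpa using hy
    · simpa [hj] using hx j
  have := pairing_normalVec_le_of_isMinOn hK hedge hq hmin hyQ
  rw [map_add, pairing_single, hQ] at this
  rw [real_inner_comm]
  linarith

end Minimizer

section Billiard

variable {n : ℕ} {K : Set (Euc n)}

theorem IsConvexBody.exists_forall_inner_le (hK : IsConvexBody K) (v : Euc n) :
    ∃ a ∈ K, ∀ y ∈ K, ⟪v, y⟫ ≤ ⟪v, a⟫ :=
  hK.1.exists_isMaxOn (f := fun y => ⟪v, y⟫) (hK.2.2.mono interior_subset) (by fun_prop)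

theorem exists_isBilliard_polyLength_le (hK : IsConvexBody K) (k : ℕ)
    (p : Fin (k + 1) → Euc n) (hp : ¬ Fits (interior K) p) :
    ∃ (m : ℕ) (_ : NeZero m) (Q : Fin m → Euc n),
      IsBilliard K Q ∧ polyLength Q ≤ polyLength p := by
  induction k with
  | zero => exact absurd (fits_of_unique (ι := Fin 1) hK.2.2 p) hp
  | succ k ih =>
    obtain ⟨q, hq, hqp, hmin⟩ := exists_isMinOn_polyLength isOpen_interior hp
    by_cases hdeg : ∃ j, q j ∈ segment ℝ (q (j - 1)) (q (j + 1))
    · obtain ⟨j, hj⟩ := hdeg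
      obtain ⟨q', hq'q, hseg⟩ := exists_delete_vertex hj
      obtain ⟨m, hm, Q, hQ, hQq'⟩ :=
        ih q' fun h => hq (h.of_forall_mem_segment hK.2.1.interior hseg)
      exact ⟨m, hm, Q, hQ, by linarith⟩
    · simp only [not_exists] at hdeg
      obtain ⟨x, hx⟩ := exists_isBilliard_add_const_of_isMinOn hK (by omega) hq hmin hdeg
      exact ⟨k + 2, inferInstance, _, hx, by rwa [polyLength_add_const]⟩

theorem muP_le_polyLength_of_not_fits (hK : IsConvexBody K) {m : ℕ} [NeZero m]
    {p : Fin m → Euc n} (hp : ¬ Fits (interior K) p) : muP K ≤ polyLength p := by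
  obtain ⟨k, rfl⟩ := Nat.exists_eq_succ_of_ne_zero (NeZero.ne m)
  obtain ⟨m', hm', Q, hQ, hQp⟩ := exists_isBilliard_polyLength_le hK k p hp
  unfold muP
  refine le_trans (csInf_le ⟨0, ?_⟩ ⟨m', hm', Q, hQ, rfl⟩) hQp
  rintro _ ⟨_, _, q, -, rfl⟩
  exact polyLength_nonneg q

theorem muP_le_of_forall_pairing_le (hK : IsConvexBody K) {m : ℕ} [NeZero m]
    {q : Fin m → Euc n} {i : Fin m} (hi : q (i + 1) ≠ q i) {S : ℝ}
    (hS : ∀ y : Fin m → Euc n, (∀ j, y j ∈ K) → pairing (normalVec q) y ≤ S) :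
    muP K ≤ S := by
  have hL := polyLength_pos hi
  obtain ⟨z, hz⟩ := hK.2.2
  have hS0 : 0 ≤ S := by
    simpa [pairing_const, sum_normalVec] using hS (fun _ => z) fun _ => interior_subset hz
  -- the normals of `q` obstruct the copy of `q` scaled to length `S`
  have hobs : IsObstruction K (pairing (normalVec q)) ((S / polyLength q) • q) := by
    refine ⟨fun h => ?_, fun x => by simp [pairing_const, sum_normalVec], fun y hy => ?_⟩
    · have := LinearMap.congr_fun h q
      rw [pairing_normalVec_self, LinearMap.zero_apply] at this
      exact hL.ne' this
    · rw [map_smul, pairing_normalVec_self, smul_eq_mul, div_mul_cancel₀ _ hL.ne']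
      exact hS y hy
  calc muP K ≤ polyLength ((S / polyLength q) • q) :=
        muP_le_polyLength_of_not_fits hK hobs.not_fits_interior
    _ = S := by rw [polyLength_smul _ (by positivity), div_mul_cancel₀ _ hL.ne']

end Billiard

theorem stmt4_general {n : ℕ} (K₁ K₂ : Set (Euc n))
    (hK₁ : IsConvexBody K₁) (hK₂ : IsConvexBody K₂) :
    ∀ (m : ℕ) [NeZero m] (q : Fin m → Euc n),
      IsBilliard (K₁ + K₂) q → muP K₁ + muP K₂ ≤ polyLength q := by
  rintro m _ q ⟨-, hedge, -, hrefl⟩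
  choose a haK ha using fun i => hK₁.exists_forall_inner_le (normalVec q i)
  choose b hbK hb using fun i => hK₂.exists_forall_inner_le (normalVec q i)
  have h₁ : muP K₁ ≤ pairing (normalVec q) a :=
    muP_le_of_forall_pairing_le hK₁ (hedge 0) fun _ hy => pairing_le_pairing fun i => ha i _ (hy i)
  have h₂ : muP K₂ ≤ pairing (normalVec q) b :=
    muP_le_of_forall_pairing_le hK₂ (hedge 0) fun _ hy => pairing_le_pairing fun i => hb i _ (hy i)
  -- `a i + b i ∈ K₁ + K₂`, so the reflection law at `q i` bounds the support values
  have hab : pairing (normalVec q) (a + b) ≤ polyLength q := by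
    rw [← pairing_normalVec_self]
    refine pairing_le_pairing fun i => ?_
    have := (hrefl i).2 _ (Set.add_mem_add (haK i) (hbK i))
    rw [inner_sub_left, real_inner_comm (normalVec q i), real_inner_comm (normalVec q i)]
      at this
    simpa using this
  rw [map_add] at hab
  linarith

theorem stmt4 {n : ℕ} (K₁ K₂ : Set (Euc n))
    (hK₁ : IsConvexBody K₁) (hK₂ : IsConvexBody K₂)
    (hex₁ : ∃ (m : ℕ) (hm : NeZero m) (q : Fin m → Euc n), @IsBilliard n m hm K₁ q)
    (hex₂ : ∃ (m : ℕ) (hm : NeZero m) (q : Fin m → Euc n), @IsBilliard n m hm K₂ q) :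
    ∀ (m : ℕ) [NeZero m] (q : Fin m → Euc n),
      IsBilliard (K₁ + K₂) q → muP K₁ + muP K₂ ≤ polyLength q :=
  stmt4_general K₁ K₂ hK₁ hK₂
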